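/- Let σ be a deterministic assignment. Consider the greedy procedure: initialize N' = N and H' = H; while N' ≠ ∅, if no agent i ∈ N' has σ(i) as his most preferred house in H' the procedure fails, otherwise pick the least such agent i, remove i from N', and remove σ(i) from H'. Then σ is in the support of the RSD lottery (i.e., SD(R,π) = σ for some permutation π of N) if and only if the greedy procedure never fails; moreover, in that case the order π* in which the agents are picked satisfies SD(R,π*) = σ. -/

import Mathlib

/-!
`SD P π = σ` exactly when every agent `π t` finds `σ (π t)` most preferred among the houses
that `σ` does not give to the agents `π 0, …, π (t-1)` before him. If such a `π` exists, then in
any set `N'` of remaining agents the one coming first in `π` prefers his own house to every other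
house of `σ(N')`, so the greedy procedure cannot get stuck. Conversely, the order in which the
greedy procedure picks the agents has this property by construction.
-/

open Classical in
/-- `best r B` is the most preferred house in `B` according to the strict preference `r`
(an arbitrary element if no such house exists, which cannot happen for a nonempty `B` and a
strict linear order `r`). -/
noncomputable def best {H : Type*} [Nonempty H] (r : H → H → Prop) (B : Finset H) : H :=
  if h : ∃ x, x ∈ B ∧ ∀ y ∈ B, y ≠ x → r x y then h.choose else Classical.arbitrary H

/-- `taken P π t` is the set of houses picked by the first `t` dictators `π 0, …, π (t-1)`,
each picking his most preferred house among the remaining ones. -/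
noncomputable def taken {n : ℕ} {H : Type*} [Fintype H] [DecidableEq H] [Nonempty H]
    (P : Fin n → H → H → Prop) (π : Equiv.Perm (Fin n)) : ℕ → Finset H
  | 0 => ∅
  | t + 1 =>
      if h : t < n then
        insert (best (P (π ⟨t, h⟩)) (Finset.univ \ taken P π t)) (taken P π t)
      else taken P π t

/-- The serial dictatorship assignment: agent `i`, picking at position `π.symm i`, receives
his most preferred house among those not taken by the agents preceding him in `π`. -/
noncomputable def SD {n : ℕ} {H : Type*} [Fintype H] [DecidableEq H] [Nonempty H]
    (P : Fin n → H → H → Prop) (π : Equiv.Perm (Fin n)) (i : Fin n) : H :=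
  best (P i) (Finset.univ \ taken P π (π.symm i).1)

open Classical in
/-- The greedy procedure for the assignment setting: given a working set `N'` of agents and a
working set `H'` of houses, repeatedly pick the least agent `i ∈ N'` whose house `σ i` is his
most preferred house in `H'` (failing, i.e. returning `none`, if there is no such agent),
remove `i` from `N'` and `σ i` from `H'`, until `N' = ∅`.  On success it returns the list of
picked agents in order. `fuel` bounds the number of iterations. -/
noncomputable def greedyA {n : ℕ} {H : Type*} [DecidableEq H]
    (P : Fin n → H → H → Prop) (σ : Fin n → H) :
    ℕ → Finset (Fin n) → Finset H → Option (List (Fin n))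
  | 0, _, _ => some []
  | fuel + 1, N', H' =>
      if N' = ∅ then some []
      else
        let C := N'.filter (fun i => σ i ∈ H' ∧ ∀ h' ∈ H', h' ≠ σ i → P i (σ i) h')
        if h : C.Nonempty then
          let i := C.min' h
          (greedyA P σ fuel (N'.erase i) (H'.erase (σ i))).map (fun L => i :: L)
        else none

open Finset Function

section Best

variable {H : Type*} {r : H → H → Prop} {A B : Finset H} {x : H}

def IsMostPreferred (r : H → H → Prop) (B : Finset H) (x : H) : Prop :=
  x ∈ B ∧ ∀ y ∈ B, y ≠ x → r x y

theorem IsMostPreferred.of_subset (h : IsMostPreferred r B x) (hx : x ∈ A) (hAB : A ⊆ B) :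
    IsMostPreferred r A x :=
  ⟨hx, fun y hy => h.2 y (hAB hy)⟩

theorem exists_isMostPreferred [IsStrictTotalOrder H r] (hB : B.Nonempty) :
    ∃ x, IsMostPreferred r B x := by
  obtain ⟨m, hm, hmin⟩ :=
    (Set.wellFoundedOn_iff.mp (B.finite_toSet.wellFoundedOn (r := r))).has_min B hB
  refine ⟨m, hm, fun y hy hym => ?_⟩
  by_contra hmy
  exact hym (Std.Trichotomous.trichotomous y m (fun hym' => hmin y hy ⟨hym', hy, hm⟩) hmy)

variable [Nonempty H]

theorem best_eq_of_isMostPreferred [Std.Asymm r] (h : IsMostPreferred r B x) : best r B = x := by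
  have hex : ∃ z, z ∈ B ∧ ∀ y ∈ B, y ≠ z → r z y := ⟨x, h⟩
  rw [best, dif_pos hex]
  by_contra hne
  exact Std.Asymm.asymm _ _ (h.2 _ hex.choose_spec.1 hne) (hex.choose_spec.2 x h.1 (Ne.symm hne))

theorem isMostPreferred_best [IsStrictTotalOrder H r] (hB : B.Nonempty) :
    IsMostPreferred r B (best r B) := by
  obtain ⟨x, hx⟩ := exists_isMostPreferred (r := r) hB
  rwa [best_eq_of_isMostPreferred hx]

end Best

section SerialDictatorship

variable {n : ℕ} {H : Type*} [Fintype H] [DecidableEq H] [Nonempty H]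
  {P : Fin n → H → H → Prop} {π : Equiv.Perm (Fin n)} {σ : Fin n → H}

theorem SD_apply_perm (t : Fin n) : SD P π (π t) = best (P (π t)) (univ \ taken P π t) := by
  simp [SD]

theorem taken_succ_of_lt {t : ℕ} (ht : t < n) :
    taken P π (t + 1) = insert (best (P (π ⟨t, ht⟩)) (univ \ taken P π t)) (taken P π t) := by
  rw [taken, dif_pos ht]

theorem mem_take_ofFn_iff {i : Fin n} {t : ℕ} : i ∈ (List.ofFn π).take t ↔ (π.symm i).1 < t := by
  rw [List.mem_take_iff_getElem]
  constructor
  · rintro ⟨j, hj, rfl⟩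
    simpa using (lt_min_iff.mp hj).1
  · intro h
    exact ⟨π.symm i, by simp [h], by simp⟩

theorem taken_eq_image_take {t : ℕ} (ht : t ≤ n)
    (h : ∀ s : Fin n, s.1 < t → best (P (π s)) (univ \ taken P π s) = σ (π s)) :
    taken P π t = ((List.ofFn π).take t).toFinset.image σ := by
  induction t with
  | zero => simp [taken]
  | succ t ih =>
    rw [taken_succ_of_lt ht, h ⟨t, ht⟩ t.lt_succ_self,
      ih (Nat.le_of_lt ht) fun s hs => h s (hs.trans t.lt_succ_self), List.take_add_one,
      List.getElem?_ofFn]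
    simp [show t < n from ht]

theorem SD_eq_of_forall_isMostPreferred [∀ i, Std.Asymm (P i)]
    (h : ∀ t : Fin n,
      IsMostPreferred (P (π t)) (univ \ ((List.ofFn π).take t).toFinset.image σ) (σ (π t))) :
    SD P π = σ := by
  have hpick : ∀ t : Fin n, best (P (π t)) (univ \ taken P π t) = σ (π t) := by
    intro t
    induction t using WellFoundedLT.induction with
    | _ t ih => rw [taken_eq_image_take t.2.le ih]; exact best_eq_of_isMostPreferred (h t)
  funext i
  obtain ⟨t, rfl⟩ := π.surjective i
  rw [SD_apply_perm, hpick]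

theorem exists_isMostPreferred_image_of_SD_eq [∀ i, IsStrictTotalOrder H (P i)]
    (hσ : Injective σ) (hSD : SD P π = σ) {N' : Finset (Fin n)} (hN : N'.Nonempty) :
    ∃ i ∈ N', IsMostPreferred (P i) (N'.image σ) (σ i) := by
  obtain ⟨i, hi, hfirst⟩ := N'.exists_min_image π.symm hN
  have htaken : taken P π (π.symm i) = ((List.ofFn π).take (π.symm i)).toFinset.image σ :=
    taken_eq_image_take (π.symm i).2.le fun s _ => by rw [← SD_apply_perm, hSD]
  have hsub : N'.image σ ⊆ univ \ taken P π (π.symm i) := by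
    intro y hy
    obtain ⟨j, hj, rfl⟩ := mem_image.mp hy
    rw [htaken, mem_sdiff, mem_image]
    refine ⟨mem_univ _, fun ⟨k, hk, hkj⟩ => ?_⟩
    rw [hσ hkj, List.mem_toFinset, mem_take_ofFn_iff] at hk
    exact absurd (hfirst j hj) (not_le.mpr hk)
  have hσi : σ i ∈ N'.image σ := mem_image_of_mem σ hi
  have hbest : best (P i) (univ \ taken P π (π.symm i)) = σ i := congrFun hSD i
  exact ⟨i, hi, (hbest ▸ isMostPreferred_best ⟨σ i, hsub hσi⟩).of_subset hσi hsub⟩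

end SerialDictatorship

section Greedy

variable {n : ℕ} {H : Type*} [DecidableEq H] {P : Fin n → H → H → Prop} {σ : Fin n → H}

theorem greedyA_succ_eq_some {fuel : ℕ} {N' : Finset (Fin n)} {H' : Finset H}
    {L : List (Fin n)} (hN : N'.Nonempty) (h : greedyA P σ (fuel + 1) N' H' = some L) :
    ∃ i ∈ N', IsMostPreferred (P i) H' (σ i) ∧
      ∃ L', L = i :: L' ∧ greedyA P σ fuel (N'.erase i) (H'.erase (σ i)) = some L' := by
  classical
  rw [greedyA, if_neg hN.ne_empty] at h
  dsimp only at h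
  split at h
  next hC =>
    obtain ⟨L', hL', rfl⟩ := Option.map_eq_some_iff.mp h
    obtain ⟨hi, hbest⟩ := mem_filter.mp (min'_mem _ hC)
    exact ⟨_, hi, hbest, L', rfl, hL'⟩
  next => simp at h

theorem greedyA_eq_some {fuel : ℕ} {N' : Finset (Fin n)} {H' : Finset H} {L : List (Fin n)}
    (h : greedyA P σ fuel N' H' = some L) (hcard : N'.card = fuel) :
    L.Nodup ∧ L.toFinset = N' ∧ ∀ k (hk : k < L.length),
      IsMostPreferred (P L[k]) (H' \ (L.take k).toFinset.image σ) (σ L[k]) := by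
  induction fuel generalizing N' H' L with
  | zero =>
    rw [greedyA, Option.some_inj] at h
    subst h
    simp [card_eq_zero.mp hcard]
  | succ fuel ih =>
    obtain ⟨i, hi, hbest, L', rfl, hL'⟩ :=
      greedyA_succ_eq_some (card_pos.mp (hcard ▸ fuel.succ_pos)) h
    obtain ⟨hnd, hset, hpick⟩ := ih hL' (by rw [card_erase_of_mem hi, hcard]; rfl)
    refine ⟨List.nodup_cons.mpr ⟨fun hi' => ?_, hnd⟩,
      by rw [List.toFinset_cons, hset, insert_erase hi], ?_⟩
    · simpa [hset] using List.mem_toFinset.mpr hi'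
    · rintro (_ | k) hk
      · simpa using hbest
      · simpa [sdiff_insert, erase_sdiff_comm] using hpick k (by simpa using hk)

theorem greedyA_isSome_of_forall_exists (hσ : Injective σ)
    (hex : ∀ N' : Finset (Fin n), N'.Nonempty →
      ∃ i ∈ N', IsMostPreferred (P i) (N'.image σ) (σ i))
    (fuel : ℕ) (N' : Finset (Fin n)) : (greedyA P σ fuel N' (N'.image σ)).isSome := by
  classical
  induction fuel generalizing N' with
  | zero => simp [greedyA]
  | succ fuel ih =>
    rw [greedyA]
    dsimp only
    split_ifs with hN hC
    · rfl
    · simpa [← image_erase hσ] using ih _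
    · obtain ⟨i, hi, hbest⟩ := hex N' (nonempty_iff_ne_empty.mpr hN)
      exact absurd ⟨i, mem_filter.mpr ⟨hi, hbest⟩⟩ hC

theorem greedyA_univ_eq_some [Fintype H] {L : List (Fin n)}
    (h : greedyA P σ n univ univ = some L) :
    L.Nodup ∧ L.length = n ∧ ∀ k (hk : k < L.length),
      IsMostPreferred (P L[k]) (univ \ (L.take k).toFinset.image σ) (σ L[k]) := by
  obtain ⟨hnd, hset, hpick⟩ := greedyA_eq_some h (card_fin n)
  refine ⟨hnd, ?_, hpick⟩
  rw [← List.toFinset_card_of_nodup hnd, hset, card_fin]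

end Greedy

theorem List.exists_perm_getElem?_eq {n : ℕ} {L : List (Fin n)} (hnd : L.Nodup)
    (hlen : L.length = n) : ∃ π : Equiv.Perm (Fin n), ∀ t : Fin n, L[t.1]? = some (π t) := by
  let f : Fin n → Fin n := fun t => L[t.1]'(by omega)
  have hf : Injective f := fun a b hab => Fin.ext (hnd.getElem_inj_iff.mp hab)
  exact ⟨Equiv.ofBijective f (Finite.injective_iff_bijective.mp hf),
    fun t => List.getElem?_eq_getElem _⟩

theorem List.eq_ofFn_of_getElem?_eq {n : ℕ} {α : Type*} {L : List α} {f : Fin n → α}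
    (hlen : L.length = n) (h : ∀ t : Fin n, L[t.1]? = some (f t)) : L = List.ofFn f :=
  List.ext_getElem (by simp [hlen]) fun k hk _ => by
    simpa [List.getElem?_eq_getElem hk] using h ⟨k, hlen ▸ hk⟩

theorem SD_eq_of_greedyA_eq_some {n : ℕ} {H : Type*} [Fintype H] [DecidableEq H] [Nonempty H]
    {P : Fin n → H → H → Prop} [∀ i, IsStrictTotalOrder H (P i)] {σ : Fin n → H}
    {L : List (Fin n)} (hL : greedyA P σ n univ univ = some L) {π : Equiv.Perm (Fin n)}
    (hπ : ∀ t : Fin n, L[t.1]? = some (π t)) : SD P π = σ := by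
  obtain ⟨-, hlen, hpick⟩ := greedyA_univ_eq_some hL
  obtain rfl := List.eq_ofFn_of_getElem?_eq hlen hπ
  exact SD_eq_of_forall_isMostPreferred fun t => by simpa using hpick t (by simp)

theorem greedy_characterizes_assignment_support_general {n : ℕ} {H : Type*}
    [Fintype H] [DecidableEq H] [Nonempty H]
    (P : Fin n → H → H → Prop) (hP : ∀ i, IsStrictTotalOrder H (P i))
    (σ : Fin n → H) (hσ : Function.Bijective σ) :
    ((∃ π : Equiv.Perm (Fin n), SD P π = σ) ↔
        (greedyA P σ n Finset.univ Finset.univ).isSome = true) ∧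
      ∀ L : List (Fin n), greedyA P σ n Finset.univ Finset.univ = some L →
        ∀ π : Equiv.Perm (Fin n), (∀ t : Fin n, L[t.1]? = some (π t)) →
          SD P π = σ := by
  have := hP
  refine ⟨⟨fun ⟨π, hSD⟩ => ?_, fun hsome => ?_⟩,
    fun L hL π hπ => SD_eq_of_greedyA_eq_some hL hπ⟩
  · simpa [image_univ_of_surjective hσ.surjective] using greedyA_isSome_of_forall_exists
      hσ.injective (fun _ => exists_isMostPreferred_image_of_SD_eq hσ.injective hSD) n univ
  · obtain ⟨L, hL⟩ := Option.isSome_iff_exists.mp hsome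
    obtain ⟨hnd, hlen, -⟩ := greedyA_univ_eq_some hL
    obtain ⟨π, hπ⟩ := List.exists_perm_getElem?_eq hnd hlen
    exact ⟨π, SD_eq_of_greedyA_eq_some hL hπ⟩

/-- Correctness of the greedy procedure in the assignment setting: a deterministic assignment
`σ` is in the support of the RSD lottery (i.e. `SD P π = σ` for some permutation `π`) iff the
greedy procedure started from `N' = N` and `H' = H` never fails; moreover, on success, the
permutation `π*` listing the agents in the order they were picked satisfies `SD P π* = σ`. -/
theorem greedy_characterizes_assignment_support {n : ℕ} {H : Type*}
    [Fintype H] [DecidableEq H] [Nonempty H] (hcard : Fintype.card H = n)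
    (P : Fin n → H → H → Prop) (hP : ∀ i, IsStrictTotalOrder H (P i))
    (σ : Fin n → H) (hσ : Function.Bijective σ) :
    ((∃ π : Equiv.Perm (Fin n), SD P π = σ) ↔
        (greedyA P σ n Finset.univ Finset.univ).isSome = true) ∧
      ∀ L : List (Fin n), greedyA P σ n Finset.univ Finset.univ = some L →
        ∀ π : Equiv.Perm (Fin n), (∀ t : Fin n, L[t.1]? = some (π t)) →
          SD P π = σ :=
  greedy_characterizes_assignment_support_general P hP σ hσ
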